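/- arXiv:1311.7228 — 8 statements merged into one kernel-verified Lean document; each statement's English description precedes it below -/
import Mathlib

section
/- There exists a unique sequence of polynomials (C_n(x|q))_{n≥1} in ℚ(q)[x] such that C_1(x|q) = 1, C_n(-q^{-1}|q) = 0 for all n ≥ 2, and C_{n+1}(x|q) - C_{n+1}(q^{-1}x - q^{-1}|q) = (1 + (q-1)x)·C_n(qx+1|q) for all n ≥ 1; moreover C_n(x|q) has degree n-1 in x for every n ≥ 1. -/
/-!
The substitution `x ↦ q⁻¹x - q⁻¹` is the dilation by `q⁻¹` centred at its fixed point
`p = -(q - 1)⁻¹`. In the Taylor expansion at `p`, the operator `f ↦ f - f(q⁻¹x - q⁻¹)` multiplies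
the coefficient of `(x - p)^k` by `1 - q⁻ᵏ`, which vanishes only for `k = 0` because `q` is not a
root of unity. Hence the operator preserves degrees, its kernel is the constants, and it maps onto
the polynomials vanishing at `p`. The right-hand side `(1 + (q - 1)x) C_n(qx + 1)` vanishes at `p`,
so `C_{n+1}` exists, has degree one more than `C_n`, and is unique once the constant is fixed by
`C_{n+1}(-q⁻¹) = 0`.
-/

open Polynomial Finset

/-- The indeterminate `q`, as an element of the field of rational functions `ℚ(q)`. -/
noncomputable def qq : RatFunc ℚ := RatFunc.X

/-- The defining property of the sequence `(C_n(x|q))_{n ≥ 1}`: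
`C_1(x|q) = 1`, `C_n(-q⁻¹|q) = 0` for `n ≥ 2`, and
`C_{n+1}(x|q) - C_{n+1}(q⁻¹x - q⁻¹|q) = (1 + (q-1)x)·C_n(qx+1|q)` for `n ≥ 1`. -/
def IsCRSeq (Cs : ℕ → Polynomial (RatFunc ℚ)) : Prop :=
  Cs 1 = 1 ∧
  (∀ n, 2 ≤ n → (Cs n).eval (-qq⁻¹) = 0) ∧
  (∀ n, 1 ≤ n →
    Cs (n + 1) -
        (Cs (n + 1)).comp (Polynomial.C qq⁻¹ * Polynomial.X - Polynomial.C qq⁻¹) =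
      (1 + Polynomial.C (qq - 1) * Polynomial.X) *
        (Cs n).comp (Polynomial.C qq * Polynomial.X + 1))

namespace Polynomial

section CommRing

variable {R : Type*} [CommRing R] (a p : R)

noncomputable def dilation : R[X] := C a * (X - C p) + C p

lemma taylor_comp_dilation (f : R[X]) :
    taylor p (f.comp (dilation a p)) = (taylor p f).comp (C a * X) := by
  simp only [taylor_apply, comp_assoc, dilation, add_comp, mul_comp, sub_comp, C_comp, X_comp]
  ring_nf

lemma coeff_taylor_sub_comp_dilation (f : R[X]) (k : ℕ) :
    (taylor p (f - f.comp (dilation a p))).coeff k = (1 - a ^ k) * (taylor p f).coeff k := by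
  rw [map_sub, taylor_comp_dilation, coeff_sub, comp_C_mul_X_coeff]
  ring

end CommRing

variable {K : Type*} [Field K] {a : K} (p : K)

lemma one_sub_pow_ne_zero_of_not_isOfFinOrder (ha : ¬IsOfFinOrder a) {k : ℕ} (hk : k ≠ 0) :
    1 - a ^ k ≠ 0 :=
  sub_ne_zero.2 fun h => ha (isOfFinOrder_iff_pow_eq_one.2 ⟨k, Nat.pos_of_ne_zero hk, h.symm⟩)

lemma natDegree_sub_comp_dilation (ha : ¬IsOfFinOrder a) (f : K[X]) :
    (f - f.comp (dilation a p)).natDegree = f.natDegree := by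
  rw [← natDegree_taylor _ p, ← natDegree_taylor f p]
  apply le_antisymm
  · refine natDegree_le_iff_coeff_eq_zero.2 fun k hk => ?_
    rw [coeff_taylor_sub_comp_dilation, coeff_eq_zero_of_natDegree_lt hk, mul_zero]
  · rcases eq_or_ne (taylor p f).natDegree 0 with h | h
    · exact h ▸ Nat.zero_le _
    · refine le_natDegree_of_ne_zero ?_
      rw [coeff_taylor_sub_comp_dilation, coeff_natDegree]
      exact mul_ne_zero (one_sub_pow_ne_zero_of_not_isOfFinOrder ha h)
        (leadingCoeff_ne_zero.2 (ne_zero_of_natDegree_gt (Nat.pos_of_ne_zero h)))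

lemma exists_sub_comp_dilation_eq (ha : ¬IsOfFinOrder a) {g : K[X]} (hg : g.eval p = 0) :
    ∃ f : K[X], f - f.comp (dilation a p) = g := by
  -- The junk `k = 0` term (division by `1 - a ^ 0 = 0`) is harmless since `g.eval p = 0`.
  let F : K[X] := ∑ k ∈ range ((taylor p g).natDegree + 1),
    C ((taylor p g).coeff k / (1 - a ^ k)) * X ^ k
  refine ⟨taylor (-p) F, taylor_injective p (ext fun k => ?_)⟩
  rw [coeff_taylor_sub_comp_dilation, taylor_taylor, add_neg_cancel, taylor_zero,
    finsetSum_coeff]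
  simp only [coeff_C_mul_X_pow, sum_ite_eq, mem_range, Nat.lt_succ_iff]
  split_ifs with hk
  · rcases eq_or_ne k 0 with rfl | hk0
    · simp [taylor_coeff_zero, hg]
    · field_simp [one_sub_pow_ne_zero_of_not_isOfFinOrder ha hk0]
  · rw [mul_zero, coeff_eq_zero_of_natDegree_lt (not_le.1 hk)]

lemma eq_of_sub_comp_dilation_eq (ha : ¬IsOfFinOrder a) {f₁ f₂ : K[X]}
    (h : f₁ - f₁.comp (dilation a p) = f₂ - f₂.comp (dilation a p)) {r : K}
    (hr : f₁.eval r = f₂.eval r) : f₁ = f₂ := by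
  have hfixed : (f₁ - f₂) - (f₁ - f₂).comp (dilation a p) = 0 := by
    rw [sub_comp]; linear_combination h
  have hconst : (f₁ - f₂).natDegree = 0 := by
    rw [← natDegree_sub_comp_dilation p ha, hfixed, natDegree_zero]
  have hzero := congrArg (eval r) (eq_C_of_natDegree_eq_zero hconst)
  rw [eval_sub, hr, sub_self, eval_C] at hzero
  rw [← sub_eq_zero, eq_C_of_natDegree_eq_zero hconst, ← hzero, C_0]

lemma existsUnique_sub_comp_dilation_eq (ha : ¬IsOfFinOrder a) {g : K[X]} (hg : g.eval p = 0)
    (r : K) : ∃! f : K[X], f - f.comp (dilation a p) = g ∧ f.eval r = 0 := by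
  obtain ⟨f, hf⟩ := exists_sub_comp_dilation_eq p ha hg
  refine ⟨f - C (f.eval r), ⟨by rw [sub_comp, C_comp, ← hf]; ring, by simp⟩, ?_⟩
  rintro f' ⟨hf', hf'r⟩
  refine eq_of_sub_comp_dilation_eq p ha ?_ (r := r) (by simp [hf'r])
  rw [hf', sub_comp, C_comp, ← hf]
  ring

end Polynomial

lemma qq_ne_zero : qq ≠ 0 := RatFunc.X_ne_zero

lemma qq_pow_ne_one {n : ℕ} (hn : n ≠ 0) : qq ^ n ≠ 1 := by
  intro h
  have hpoly : algebraMap ℚ[X] (RatFunc ℚ) (X ^ n) = algebraMap ℚ[X] (RatFunc ℚ) 1 := by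
    rw [map_pow, RatFunc.algebraMap_X, map_one]
    exact h
  simpa [hn] using congrArg natDegree (RatFunc.algebraMap_injective ℚ hpoly)

lemma qq_sub_one_ne_zero : qq - 1 ≠ 0 :=
  sub_ne_zero.2 (by simpa using qq_pow_ne_one one_ne_zero)

lemma qq_inv_not_isOfFinOrder : ¬IsOfFinOrder qq⁻¹ := by
  rw [isOfFinOrder_iff_pow_eq_one]
  rintro ⟨n, hn, h⟩
  rw [inv_pow, inv_eq_one] at h
  exact qq_pow_ne_one hn.ne' h

lemma dilation_qq : dilation qq⁻¹ (-(qq - 1)⁻¹) = C qq⁻¹ * X - C qq⁻¹ := by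
  have hconst : -(qq - 1)⁻¹ - qq⁻¹ * -(qq - 1)⁻¹ = -qq⁻¹ := by
    field_simp [qq_ne_zero, qq_sub_one_ne_zero]
    ring
  calc dilation qq⁻¹ (-(qq - 1)⁻¹) = C qq⁻¹ * X + C (-(qq - 1)⁻¹ - qq⁻¹ * -(qq - 1)⁻¹) := by
        simp only [dilation, C_sub, C_mul]; ring
    _ = C qq⁻¹ * X - C qq⁻¹ := by rw [hconst, C_neg, sub_eq_add_neg]

noncomputable def crRhs (h : (RatFunc ℚ)[X]) : (RatFunc ℚ)[X] :=
  (1 + C (qq - 1) * X) * h.comp (C qq * X + 1)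

lemma eval_crRhs (h : (RatFunc ℚ)[X]) : (crRhs h).eval (-(qq - 1)⁻¹) = 0 := by
  simp [crRhs, mul_inv_cancel₀ qq_sub_one_ne_zero]

lemma degree_crRhs (h : (RatFunc ℚ)[X]) : (crRhs h).degree = h.degree + 1 := by
  have hlin : (1 + C (qq - 1) * X).degree = 1 := by
    rw [add_comm, ← C_1]; exact degree_linear qq_sub_one_ne_zero
  have hshift : (C qq * X + 1).degree = 1 := by
    rw [← C_1]; exact degree_linear qq_ne_zero
  rw [crRhs, degree_mul, hlin, degree_comp (hshift ▸ zero_lt_one), hshift, mul_one, add_comm]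

def IsCRStep (h f : (RatFunc ℚ)[X]) : Prop :=
  f - f.comp (dilation qq⁻¹ (-(qq - 1)⁻¹)) = crRhs h ∧ f.eval (-qq⁻¹) = 0

lemma existsUnique_isCRStep (h : (RatFunc ℚ)[X]) : ∃! f, IsCRStep h f :=
  existsUnique_sub_comp_dilation_eq _ qq_inv_not_isOfFinOrder (eval_crRhs h) _

lemma isCRSeq_iff {Cs : ℕ → (RatFunc ℚ)[X]} :
    IsCRSeq Cs ↔ Cs 1 = 1 ∧ ∀ n, 1 ≤ n → IsCRStep (Cs n) (Cs (n + 1)) := by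
  simp only [IsCRSeq, IsCRStep, dilation_qq, crRhs]
  constructor
  · rintro ⟨h1, heval, hrec⟩
    exact ⟨h1, fun n hn => ⟨hrec n hn, heval (n + 1) (by omega)⟩⟩
  · rintro ⟨h1, hstep⟩
    refine ⟨h1, fun n hn => ?_, fun n hn => (hstep n hn).1⟩
    obtain ⟨m, rfl⟩ : ∃ m, n = m + 1 := ⟨n - 1, by omega⟩
    exact (hstep m (by omega)).2

theorem IsCRSeq.eq {Cs Cs' : ℕ → (RatFunc ℚ)[X]} (h : IsCRSeq Cs) (h' : IsCRSeq Cs') {n : ℕ}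
    (hn : 1 ≤ n) : Cs n = Cs' n := by
  rw [isCRSeq_iff] at h h'
  induction n, hn using Nat.le_induction with
  | base => rw [h.1, h'.1]
  | succ n hn ih => exact (existsUnique_isCRStep (Cs n)).unique (h.2 n hn) (ih ▸ h'.2 n hn)

noncomputable def crSeq : ℕ → (RatFunc ℚ)[X]
  | 0 => 0
  | 1 => 1
  | n + 2 => (existsUnique_isCRStep (crSeq (n + 1))).exists.choose

lemma isCRStep_crSeq (n : ℕ) : IsCRStep (crSeq (n + 1)) (crSeq (n + 2)) :=
  (existsUnique_isCRStep (crSeq (n + 1))).exists.choose_spec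

lemma isCRSeq_crSeq : IsCRSeq crSeq := by
  refine isCRSeq_iff.2 ⟨rfl, fun n hn => ?_⟩
  obtain ⟨m, rfl⟩ : ∃ m, n = m + 1 := ⟨n - 1, by omega⟩
  exact isCRStep_crSeq m

lemma degree_crSeq (n : ℕ) : (crSeq (n + 1)).degree = n := by
  induction n with
  | zero => simp [crSeq]
  | succ n ih =>
    rw [degree_eq_iff_natDegree_eq_of_pos n.succ_pos,
      ← natDegree_sub_comp_dilation _ qq_inv_not_isOfFinOrder, (isCRStep_crSeq n).1]
    exact natDegree_eq_of_degree_eq_some (by rw [degree_crRhs, ih]; norm_cast)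

/-- There exists a unique sequence of polynomials `(C_n(x|q))_{n≥1}` in `ℚ(q)[x]` with
`C_1(x|q) = 1`, `C_n(-q⁻¹|q) = 0` for `n ≥ 2`, and
`C_{n+1}(x|q) - C_{n+1}(q⁻¹x - q⁻¹|q) = (1 + (q-1)x)·C_n(qx+1|q)` for `n ≥ 1`;
moreover `C_n(x|q)` has degree `n - 1` for every `n ≥ 1`. -/
theorem statement0 :
    (∃ Cs : ℕ → Polynomial (RatFunc ℚ),
      IsCRSeq Cs ∧ ∀ n, 1 ≤ n → (Cs n).degree = ((n - 1 : ℕ) : WithBot ℕ)) ∧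
    (∀ Cs Cs' : ℕ → Polynomial (RatFunc ℚ),
      IsCRSeq Cs → IsCRSeq Cs' → ∀ n, 1 ≤ n → Cs n = Cs' n) := by
  refine ⟨⟨crSeq, isCRSeq_crSeq, fun n hn => ?_⟩, fun Cs Cs' h h' n hn => h.eq h' hn⟩
  obtain ⟨m, rfl⟩ : ∃ m, n = m + 1 := ⟨n - 1, by omega⟩
  exact degree_crSeq m
end

section
/- For all integers n ≥ 1 and k ≥ 0, C_{n+1}([k]_q | q) = q^k · C_n([k+1]_q | q) + C_{n+1}([k-1]_q | q), where [−1]_q = −q^{-1}. -/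
/-!
Evaluate the defining functional equation of `C_{n+1}` at `x = [k]_q`. The three affine maps in it
act on `q`-integers as index shifts: `q⁻¹[k]_q - q⁻¹ = [k-1]_q`, `q[k]_q + 1 = [k+1]_q` and
`1 + (q-1)[k]_q = q^k`.
-/

open Polynomial Finset

noncomputable def qzint (k : ℤ) : RatFunc ℚ := (qq ^ k - 1) / (qq - 1)

lemma qzint_sub_one (k : ℤ) : qzint (k - 1) = qq⁻¹ * qzint k - qq⁻¹ := by
  unfold qzint
  rw [zpow_sub₀ qq_ne_zero, zpow_one]
  field_simp [qq_ne_zero, qq_sub_one_ne_zero]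
  ring

lemma qzint_add_one (k : ℤ) : qzint (k + 1) = qq * qzint k + 1 := by
  unfold qzint
  rw [zpow_add₀ qq_ne_zero, zpow_one]
  field_simp [qq_sub_one_ne_zero]
  ring

lemma one_add_sub_one_mul_qzint (k : ℤ) : 1 + (qq - 1) * qzint k = qq ^ k := by
  unfold qzint
  field_simp [qq_sub_one_ne_zero]
  ring

theorem statement2_general (Cs : ℕ → Polynomial (RatFunc ℚ))
    (h3 : ∀ n, 1 ≤ n →
      Cs (n + 1) -
          (Cs (n + 1)).comp (Polynomial.C qq⁻¹ * Polynomial.X - Polynomial.C qq⁻¹) =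
        (1 + Polynomial.C (qq - 1) * Polynomial.X) *
          (Cs n).comp (Polynomial.C qq * Polynomial.X + 1))
    (n : ℕ) (hn : 1 ≤ n) (k : ℕ) :
    (Cs (n + 1)).eval (qzint (k : ℤ)) =
      qq ^ k * (Cs n).eval (qzint ((k : ℤ) + 1)) +
        (Cs (n + 1)).eval (qzint ((k : ℤ) - 1)) := by
  have h := congrArg (eval (qzint k)) (h3 n hn)
  simp only [eval_sub, eval_mul, eval_add, eval_one, eval_comp, eval_C, eval_X] at h
  rw [← qzint_sub_one, ← qzint_add_one, one_add_sub_one_mul_qzint, zpow_natCast] at h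
  linear_combination h

/-- For `n ≥ 1` and `k ≥ 0`:
`C_{n+1}([k]_q|q) = q^k·C_n([k+1]_q|q) + C_{n+1}([k-1]_q|q)`, where `[-1]_q = -q⁻¹`. -/
theorem statement2 (Cs : ℕ → Polynomial (RatFunc ℚ))
    (h1 : Cs 1 = 1)
    (h2 : ∀ n, 2 ≤ n → (Cs n).eval (-qq⁻¹) = 0)
    (h3 : ∀ n, 1 ≤ n →
      Cs (n + 1) -
          (Cs (n + 1)).comp (Polynomial.C qq⁻¹ * Polynomial.X - Polynomial.C qq⁻¹) =
        (1 + Polynomial.C (qq - 1) * Polynomial.X) *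
          (Cs n).comp (Polynomial.C qq * Polynomial.X + 1))
    (n : ℕ) (hn : 1 ≤ n) (k : ℕ) :
    (Cs (n + 1)).eval (qzint (k : ℤ)) =
      qq ^ k * (Cs n).eval (qzint ((k : ℤ) + 1)) +
        (Cs (n + 1)).eval (qzint ((k : ℤ) - 1)) :=
  statement2_general Cs h3 n hn k
end

section
/- For all n ≥ 0, C_{n+1}(1|q) = q^{n(n+1)/2} · Σ_{k=0}^{n} f(n, k | q^{-1}); equivalently, C_{n+1}(1|q) equals the reversed Carlitz–Riordan q-Catalan number q^{n(n+1)/2}·C_{n+1}(q^{-1}), where C_{n+1}(q) = Σ_{k=0}^{n} f(n,k|q). -/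
open Polynomial Finset

/-- The Carlitz–Riordan `q`-ballot numbers `f(n,k|q) ∈ ℤ[q]`:
`f(0,0|q) = 1`, `f(n,k|q) = 0` for `k > n`, and
`f(n,k|q) = q·f(n,k-1|q) + q^k·f(n-1,k|q)` for `n ≥ k ≥ 0`, `(n,k) ≠ (0,0)`
(with `f(n,-1|q) = 0`, so `f(n,0|q) = f(n-1,0|q)`). -/
noncomputable def fq : ℕ → ℕ → Polynomial ℤ
  | 0, 0 => 1
  | 0, _ + 1 => 0
  | n + 1, 0 => fq n 0
  | n + 1, k + 1 =>
    if k + 1 ≤ n + 1 then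
      Polynomial.X * fq (n + 1) k + Polynomial.X ^ (k + 1) * fq n (k + 1)
    else 0
  termination_by n k => (n, k)

/-!
Write `[j]_q = 1 + q + ⋯ + q^{j-1}`, extended by `[0]_q = 0` and `[-1]_q = -q⁻¹`. At `x = [i]_q`
we have `q⁻¹x - q⁻¹ = [i-1]_q`, `qx + 1 = [i+1]_q` and `1 + (q-1)x = q^i`, so the functional
equation becomes `C_{m+1}([i]_q) = C_{m+1}([i-1]_q) + q^i C_m([i+1]_q)`. With `C_1 = 1` and
`C_{m+1}([-1]_q) = 0` for `m ≥ 1` this determines all values `C_{m+1}([i]_q)`. Suitably rescaled,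
the ballot numbers `f(m+i, m | q⁻¹)` satisfy the same recurrence with the same initial values,
and at `i = 1` the identity `f(n+1, n) = q^n ∑_{k ≤ n} f(n, k)` gives the theorem.
-/

lemma fq_zero_right : ∀ n, fq n 0 = 1
  | 0 => by rw [fq]
  | n + 1 => by rw [fq]; exact fq_zero_right n

lemma fq_eq_zero_of_lt : ∀ n k, n < k → fq n k = 0
  | 0, k + 1, _ => by rw [fq]
  | n + 1, k + 1, h => by rw [fq, if_neg (by omega)]

lemma fq_succ_succ {n k : ℕ} (h : k ≤ n) :
    fq (n + 1) (k + 1) = X * fq (n + 1) k + X ^ (k + 1) * fq n (k + 1) := by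
  rw [fq, if_pos (by omega)]

lemma fq_succ_eq_X_pow_mul_sum (n : ℕ) :
    ∀ k, k ≤ n + 1 → fq (n + 1) k = X ^ k * ∑ j ∈ range (k + 1), fq n j
  | 0, _ => by simp [fq_zero_right]
  | k + 1, h => by
    rw [fq_succ_succ (by omega), fq_succ_eq_X_pow_mul_sum n k (by omega),
      sum_range_succ _ (k + 1)]
    ring

section

variable {K : Type*} [Field K] {q : K}

/-- `qIntPred q i` is the `q`-integer `[i-1]_q`, so that the sequence starts at `[-1]_q = -q⁻¹`.
-/
def qIntPred (q : K) : ℕ → K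
  | 0 => -q⁻¹
  | i + 1 => q * qIntPred q i + 1

lemma qIntPred_one (hq : q ≠ 0) : qIntPred q 1 = 0 := by
  simp [qIntPred, hq]

lemma qIntPred_two (hq : q ≠ 0) : qIntPred q 2 = 1 := by
  rw [qIntPred, qIntPred_one hq, mul_zero, zero_add]

lemma one_add_sub_one_mul_qIntPred_succ (hq : q ≠ 0) :
    ∀ i, 1 + (q - 1) * qIntPred q (i + 1) = q ^ i
  | 0 => by rw [qIntPred_one hq]; simp
  | i + 1 => by
    rw [pow_succ, ← one_add_sub_one_mul_qIntPred_succ hq i,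
      show qIntPred q (i + 2) = q * qIntPred q (i + 1) + 1 from rfl]
    ring

lemma inv_mul_qIntPred_succ_sub_inv (hq : q ≠ 0) (i : ℕ) :
    q⁻¹ * qIntPred q (i + 1) - q⁻¹ = qIntPred q i := by
  rw [qIntPred]
  field_simp
  ring

lemma eval_qIntPred_succ {P Q : K[X]} (hq : q ≠ 0)
    (h : P - P.comp (C q⁻¹ * X - C q⁻¹) = (1 + C (q - 1) * X) * Q.comp (C q * X + 1)) (i : ℕ) :
    P.eval (qIntPred q (i + 1)) =
      P.eval (qIntPred q i) + q ^ i * Q.eval (qIntPred q (i + 2)) := by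
  have h := congrArg (eval (qIntPred q (i + 1))) h
  simp only [eval_sub, eval_mul, eval_add, eval_comp, eval_C, eval_X, eval_one] at h
  rw [inv_mul_qIntPred_succ_sub_inv hq, one_add_sub_one_mul_qIntPred_succ hq, ← qIntPred] at h
  linear_combination h

end

section

variable {K : Type*} [Field K] [Algebra ℤ K] {q : K}

/-- `f(k+d, k | q⁻¹)`, rescaled by the power of `q` that makes its recurrence
(`revBallot_succ_succ`) free of `q⁻¹`. -/
noncomputable def revBallot (q : K) (k d : ℕ) : K :=
  q ^ (k * d + (k + 1).choose 2) * aeval q⁻¹ (fq (k + d) k)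

lemma revBallot_zero_left (d : ℕ) : revBallot q 0 d = 1 := by
  simp [revBallot, fq_zero_right]

lemma aeval_fq_succ_succ (q : K) {n k : ℕ} (h : k ≤ n) :
    aeval q (fq (n + 1) (k + 1)) =
      q * aeval q (fq (n + 1) k) + q ^ (k + 1) * aeval q (fq n (k + 1)) := by
  simp [fq_succ_succ h]

lemma revBallot_succ_zero (hq : q ≠ 0) (k : ℕ) : revBallot q (k + 1) 0 = revBallot q k 1 := by
  simp only [revBallot, aeval_fq_succ_succ _ le_rfl, fq_eq_zero_of_lt k (k + 1) (by omega),
    map_zero, Nat.choose_succ_succ (k + 1), Nat.choose_one_right, inv_pow]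
  field_simp
  ring

lemma revBallot_succ_succ (hq : q ≠ 0) (k d : ℕ) :
    revBallot q (k + 1) (d + 1) =
      revBallot q (k + 1) d + q ^ (d + 1) * revBallot q k (d + 2) := by
  simp only [revBallot, show k + 1 + (d + 1) = k + d + 1 + 1 by omega,
    aeval_fq_succ_succ _ (show k ≤ k + d + 1 by omega), Nat.choose_succ_succ (k + 1),
    Nat.choose_one_right, inv_pow]
  rw [show k + 1 + d = k + d + 1 by omega, show k + (d + 2) = k + d + 1 + 1 by omega]
  field_simp
  ring

theorem eval_qIntPred_eq_revBallot {Cs : ℕ → K[X]} (hq : q ≠ 0) (h1 : Cs 1 = 1)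
    (h2 : ∀ n, 2 ≤ n → (Cs n).eval (-q⁻¹) = 0)
    (h3 : ∀ n, 1 ≤ n →
      Cs (n + 1) - (Cs (n + 1)).comp (C q⁻¹ * X - C q⁻¹) =
        (1 + C (q - 1) * X) * (Cs n).comp (C q * X + 1))
    (m d : ℕ) : (Cs (m + 1)).eval (qIntPred q (d + 1)) = revBallot q m d := by
  induction m generalizing d with
  | zero => simp [h1, revBallot_zero_left]
  | succ m ih =>
    have step := eval_qIntPred_succ hq (h3 (m + 1) (by omega))
    induction d with
    | zero =>
      rw [step, qIntPred, h2 _ (by omega), ih, revBallot_succ_zero hq]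
      ring
    | succ d ihd => rw [step, ihd, ih, revBallot_succ_succ hq]

end

/-- For all `n ≥ 0`:
`C_{n+1}(1|q) = q^{n(n+1)/2} · Σ_{k=0}^{n} f(n,k|q⁻¹)`, the reversed `q`-Catalan number. -/
theorem statement4 (Cs : ℕ → Polynomial (RatFunc ℚ))
    (h1 : Cs 1 = 1)
    (h2 : ∀ n, 2 ≤ n → (Cs n).eval (-qq⁻¹) = 0)
    (h3 : ∀ n, 1 ≤ n →
      Cs (n + 1) -
          (Cs (n + 1)).comp (Polynomial.C qq⁻¹ * Polynomial.X - Polynomial.C qq⁻¹) =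
        (1 + Polynomial.C (qq - 1) * Polynomial.X) *
          (Cs n).comp (Polynomial.C qq * Polynomial.X + 1))
    (n : ℕ) :
    (Cs (n + 1)).eval 1 =
      qq ^ (n * (n + 1) / 2) *
        ∑ k ∈ Finset.range (n + 1), Polynomial.aeval qq⁻¹ (fq n k) := by
  have hq : qq ≠ 0 := RatFunc.X_ne_zero
  have key := eval_qIntPred_eq_revBallot hq h1 h2 h3 n 1
  rw [qIntPred_two hq] at key
  rw [key, revBallot, fq_succ_eq_X_pow_mul_sum n n (by omega), Nat.choose_two_right,
    Nat.add_sub_cancel, mul_comm (n + 1), pow_add]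
  simp only [map_mul, map_pow, aeval_X, map_sum, mul_one, inv_pow]
  rw [mul_comm (qq ^ n), mul_assoc, mul_inv_cancel_left₀ (pow_ne_zero n hq)]
end

section
/- For all n ≥ 0, the polynomial C_{n+1}(x|1) ∈ ℚ[x] satisfies the explicit formula C_{n+1}(x|1) = (x+1)·(x+n+2)(x+n+3)⋯(x+2n) / n!, i.e. C_{n+1}(x|1) = (x+1)·(x+n+2)_{n-1} / n! where (a)_m denotes the rising factorial a(a+1)⋯(a+m-1). -/
open Polynomial Finset Nat

noncomputable def statement5F (a : ℚ) (n : ℕ) : Polynomial ℚ :=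
  ∏ i ∈ Finset.range n, (X + C (a + i))

local notation "F" => statement5F

noncomputable def statement5G : ℕ → Polynomial ℚ
  | 0 => 1
  | n + 1 => (X + 1) * F ((n : ℚ) + 3) n

local notation "G" => statement5G

lemma statement5F_succ (a : ℚ) (n : ℕ) : F a (n+1) = F a n * (X + C (a + n)) := by
  simp [statement5F, Finset.prod_range_succ]

lemma statement5F_succ' (a : ℚ) (n : ℕ) : F a (n+1) = F (a+1) n * (X + C a) := by
  rw [statement5F, Finset.prod_range_succ']
  congr 1
  · rw [statement5F]
    apply Finset.prod_congr rfl
    intro i _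
    congr 1
    congr 1
    push_cast; ring
  · congr 1
    congr 1
    push_cast; ring

lemma statement5F_comp_sub (a : ℚ) (n : ℕ) : (F a n).comp (X - 1) = F (a - 1) n := by
  simp only [statement5F, Polynomial.prod_comp, add_comp, X_comp, C_comp]
  apply Finset.prod_congr rfl
  intro i _
  simp only [C_add, C_sub, C_1]
  ring

lemma statement5F_comp_add (a : ℚ) (n : ℕ) : (F a n).comp (X + 1) = F (a + 1) n := by
  simp only [statement5F, Polynomial.prod_comp, add_comp, X_comp, C_comp]
  apply Finset.prod_congr rfl
  intro i _
  simp only [C_add, C_1]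
  ring

lemma statement5Gdiff (k : ℕ) :
    G (k+1) - (G (k+1)).comp (X - 1) = C ((k : ℚ) + 1) * (G k).comp (X + 1) := by
  cases k with
  | zero =>
      simp [statement5G, statement5F]
  | succ n =>
      have e1' : G (n+2) = (X + 1) * (F ((n:ℚ) + 4) n * (X + C ((n:ℚ) + 4 + n))) := by
        show (X + 1) * F (((n+1 : ℕ) : ℚ) + 3) (n+1) = _
        push_cast
        rw [statement5F_succ]
        ring_nf
      have e2 : (G (n+2)).comp (X - 1)
          = X * (F ((n:ℚ) + 4) n * (X + C ((n:ℚ) + 3))) := by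
        show ((X + 1) * F (((n+1 : ℕ) : ℚ) + 3) (n+1)).comp (X - 1) = _
        rw [mul_comp, add_comp, X_comp, one_comp, statement5F_comp_sub]
        push_cast
        have : ((n:ℚ) + 1 + 3 - 1) = (n:ℚ) + 3 := by ring
        rw [this]
        have h4 : ((n:ℚ) + 3) + 1 = (n:ℚ) + 4 := by ring
        rw [statement5F_succ', h4]
        ring
      have e3 : (G (n+1)).comp (X + 1) = (X + 1 + 1) * (F ((n:ℚ) + 4) n) := by
        show ((X + 1) * F ((n : ℚ) + 3) n).comp (X + 1) = _
        rw [mul_comp, add_comp, X_comp, one_comp, statement5F_comp_add]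
        congr 2
        ring
      rw [e2, e1', e3]
      push_cast
      simp only [C_add, map_ofNat, C_1]
      set P := F ((n:ℚ) + 4) n
      set Y := C ((n:ℚ))
      ring

lemma statement5_zero_of_shift (p : Polynomial ℚ) (h : p.comp (X - 1) = p)
    (h0 : p.eval (-1) = 0) : p = 0 := by
  have key : ∀ t : ℚ, p.eval (t - 1) = p.eval t := by
    intro t
    conv_rhs => rw [← h]
    rw [eval_comp]
    simp
  have hn : ∀ n : ℕ, p.eval ((n : ℚ) - 1) = 0 := by
    intro n
    induction n with
    | zero => simpa using h0
    | succ m ih =>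
        have : ((m : ℚ) + 1 - 1 : ℚ) = (m : ℚ) := by ring
        push_cast
        rw [this, ← key (m : ℚ)]
        exact ih
  by_contra hp
  have hfin : {x : ℚ | p.IsRoot x}.Finite := Polynomial.finite_setOf_isRoot hp
  have hinf : {x : ℚ | p.IsRoot x}.Infinite := by
    have hinj : Function.Injective (fun n : ℕ => (n : ℚ) - 1) := by
      intro a b hab
      simp only [sub_left_inj, Nat.cast_inj] at hab
      exact hab
    apply Set.infinite_of_injective_forall_mem hinj
    intro n
    exact hn n
  exact hinf hfin

lemma statement5_main (Cs : ℕ → Polynomial ℚ)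
    (h1 : Cs 1 = 1)
    (h2 : ∀ n, 2 ≤ n → (Cs n).eval (-1) = 0)
    (h3 : ∀ n, 1 ≤ n →
      Cs (n + 1) - (Cs (n + 1)).comp (Polynomial.X - 1) = (Cs n).comp (Polynomial.X + 1)) :
    ∀ n, C ((n ! : ℚ)) * Cs (n + 1) = G n := by
  intro n
  induction n with
  | zero => simp [h1, statement5G]
  | succ m ih =>
      set d : Polynomial ℚ := C (((m+1)! : ℚ)) * Cs (m + 2) - G (m+1) with hd
      have hfact : C (((m+1)! : ℚ)) = C ((m : ℚ) + 1) * C ((m ! : ℚ)) := by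
        rw [← map_mul]
        congr 1
        rw [Nat.factorial_succ]
        push_cast
        ring
      have hstep : C (((m+1)! : ℚ)) * Cs (m + 2)
          - (C (((m+1)! : ℚ)) * Cs (m + 2)).comp (X - 1)
          = C ((m : ℚ) + 1) * (G m).comp (X + 1) := by
        rw [mul_comp, C_comp, ← mul_sub, h3 (m+1) (by omega)]
        rw [hfact, mul_assoc]
        congr 1
        rw [← ih, mul_comp, C_comp]
      have hcomp : d.comp (X - 1) = d := by
        rw [hd, sub_comp]
        linear_combination (statement5Gdiff m) - hstep
      have heval : d.eval (-1) = 0 := by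
        rw [hd]
        have hcs : (Cs (m+2)).eval (-1) = 0 := h2 (m+2) (by omega)
        have hg : (statement5G (m+1)).eval (-1) = 0 := by
          have hGm : statement5G (m+1) = (X + 1) * F ((m : ℚ) + 3) m := rfl
          rw [hGm, eval_mul, eval_add, eval_X, eval_one]
          norm_num
        simp [hcs, hg]
      have hzero := statement5_zero_of_shift d hcomp heval
      rw [hd] at hzero
      exact sub_eq_zero.mp hzero

/-- For all `n ≥ 0`: `C_{n+1}(x|1) = (x+1)(x+n+2)⋯(x+2n)/n! = ((x+1)/(x+n+1))·binom(x+2n,n)`,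
written with the denominator `x+n+1` cleared:
`n!·(x+n+1)·C_{n+1}(x|1) = (x+1)·(x+n+1)(x+n+2)⋯(x+2n)`. -/
theorem statement5 (Cs : ℕ → Polynomial ℚ)
    (h1 : Cs 1 = 1)
    (h2 : ∀ n, 2 ≤ n → (Cs n).eval (-1) = 0)
    (h3 : ∀ n, 1 ≤ n →
      Cs (n + 1) - (Cs (n + 1)).comp (Polynomial.X - 1) = (Cs n).comp (Polynomial.X + 1))
    (n : ℕ) :
    Polynomial.C ((n ! : ℚ)) * (Polynomial.X + Polynomial.C ((n : ℚ) + 1)) * Cs (n + 1) =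
      (Polynomial.X + 1) *
        ∏ i ∈ Finset.range n, (Polynomial.X + Polynomial.C ((n : ℚ) + 1 + i)) := by
  cases n with
  | zero =>
      simp [h1]
  | succ m =>
      have H := statement5_main Cs h1 h2 h3 (m+1)
      have hG : G (m+1) = (X + 1) * F ((m : ℚ) + 3) m := rfl
      rw [hG] at H
      have hprod : ∏ i ∈ Finset.range (m+1),
          (X + C (((m+1 : ℕ) : ℚ) + 1 + i)) = F ((m : ℚ) + 2) (m+1) := by
        rw [statement5F]
        apply Finset.prod_congr rfl
        intro i _
        congr 2
        push_cast; ring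
      rw [hprod, statement5F_succ']
      have h4 : ((m : ℚ) + 2) + 1 = (m : ℚ) + 3 := by ring
      rw [h4]
      have h2' : (((m+1 : ℕ) : ℚ) + 1) = ((m : ℚ) + 2) := by push_cast; ring
      rw [h2']
      linear_combination (X + C ((m : ℚ) + 2)) * H
end

section
/- For all n ≥ 0, the following identity holds in ℚ(q)[x]: C_{n+1}(x|q) = Σ_{j=0}^{n} f(n+j, n-j | q^{-1}) · q^{jn + (n-j)(n+j+1)/2} · (x choose j)_q. -/
/-!
Let `qSucc` be the substitution `x ↦ q x + 1`, which sends `[k]_q` to `[k+1]_q`; its inverse is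
`qPred : x ↦ q⁻¹ (x - 1)`. In the basis `B_j = (x choose j)_q`, composition with `qSucc` is
bidiagonal, `B_{j+1} ∘ qSucc = q^{j+1} B_{j+1} + q^j B_j`, and
`B_{j+1} ∘ qSucc - B_{j+1} = (1 + (q-1) x) B_j`.

Since `jn + (n-j)(n+j+1)/2 = n² - C(n-j,2)`, the claimed coefficients of `C_{n+1}` are
`q^{n²} w(n+j, n-j)` with `w(N,k) = f(N,k|q⁻¹) q^{-C(k,2)}`, and the ballot recurrence becomes
`q^k w(N+1,k) = w(N+1,k-1) + w(N,k)`. Used three times, it expresses the coefficients of the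
claimed `C_{n+2}` through those of (the claimed `C_{n+1}`) `∘ qSucc ∘ qSucc`. This gives the
functional equation composed with `qSucc` for the claimed polynomials, and, since `qSucc ∘ qSucc`
sends `-q⁻¹ ↦ 0 ↦ 1`, their vanishing at `-q⁻¹`. By induction, the difference `D` between
`C_{n+2}` and its claimed value then satisfies `D ∘ qSucc = D`, so `D` is constant because `q` is
not a root of unity, and it vanishes at `-q⁻¹`.
-/

open Polynomial Finset

/-- The `q`-integer `[k]_q = (q^k - 1)/(q - 1)` in `ℚ(q)`. -/
noncomputable def qint (k : ℕ) : RatFunc ℚ := (qq ^ k - 1) / (qq - 1)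

/-- The `q`-binomial polynomial `(x choose j)_q = x(x-[1]_q)⋯(x-[j-1]_q)/([1]_q⋯[j]_q)`
in `ℚ(q)[x]`. -/
noncomputable def qbinom (j : ℕ) : Polynomial (RatFunc ℚ) :=
  Polynomial.C (∏ i ∈ Finset.range j, qint (i + 1))⁻¹ *
    ∏ i ∈ Finset.range j, (Polynomial.X - Polynomial.C (qint i))

lemma qq_pow_ne_one_s10 {d : ℕ} (hd : d ≠ 0) : qq ^ d ≠ 1 := fun h => by
  have hX : (X ^ d : ℚ[X]) = 1 :=
    RatFunc.algebraMap_injective ℚ (by simpa [qq, RatFunc.algebraMap_X] using h)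
  simpa [hd] using congrArg natDegree hX

lemma not_isOfFinOrder_qq : ¬IsOfFinOrder qq := fun h => by
  obtain ⟨d, hd, hpow⟩ := isOfFinOrder_iff_pow_eq_one.mp h
  exact qq_pow_ne_one_s10 hd.ne' hpow

lemma qint_zero : qint 0 = 0 := by simp [qint]

lemma qint_ne_zero {k : ℕ} (hk : k ≠ 0) : qint k ≠ 0 :=
  div_ne_zero (sub_ne_zero.mpr (qq_pow_ne_one_s10 hk)) qq_sub_one_ne_zero

lemma sub_one_mul_qint (k : ℕ) : (qq - 1) * qint k = qq ^ k - 1 :=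
  mul_div_cancel₀ _ qq_sub_one_ne_zero

lemma qint_succ (k : ℕ) : qint (k + 1) = qq * qint k + 1 := by
  apply mul_left_cancel₀ qq_sub_one_ne_zero
  linear_combination sub_one_mul_qint (k + 1) - qq * sub_one_mul_qint k

lemma eq_C_of_comp_eq_self {R : Type*} [CommRing R] [IsDomain R] {a b : R} (ha₀ : a ≠ 0)
    (ha : ¬IsOfFinOrder a) {P : R[X]} (h : P.comp (C a * X + C b) = P) : P = C (P.coeff 0) := by
  refine eq_C_of_natDegree_eq_zero (by_contra fun hdeg => ha ?_)
  have hlc := leadingCoeff_comp (p := P) (q := C a * X + C b) (by rw [natDegree_linear ha₀]; simp)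
  rw [h, leadingCoeff_linear ha₀] at hlc
  have hP : P.leadingCoeff ≠ 0 := leadingCoeff_ne_zero.mpr fun hP => hdeg (by simp [hP])
  exact isOfFinOrder_iff_pow_eq_one.mpr
    ⟨_, Nat.pos_of_ne_zero hdeg, (mul_eq_left₀ hP).mp hlc.symm⟩

noncomputable def qSucc : (RatFunc ℚ)[X] := C qq * X + 1

noncomputable def qPred : (RatFunc ℚ)[X] := C qq⁻¹ * X - C qq⁻¹

lemma qPred_comp_qSucc : qPred.comp qSucc = X := by
  simp only [qPred, qSucc, sub_comp, mul_comp, C_comp, X_comp]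
  rw [mul_add, ← mul_assoc, ← C_mul, inv_mul_cancel₀ qq_ne_zero]
  simp

lemma qSucc_eval_neg_inv : qSucc.eval (-qq⁻¹) = 0 := by
  simp [qSucc, qq_ne_zero]

lemma qbinom_zero : qbinom 0 = 1 := by simp [qbinom]

lemma qbinom_succ (j : ℕ) :
    qbinom (j + 1) = C (qint (j + 1))⁻¹ * (X - C (qint j)) * qbinom j := by
  simp only [qbinom, prod_range_succ, mul_inv, map_mul]
  ring

lemma X_sub_qint_succ_comp_qSucc (i : ℕ) :
    (X - C (qint (i + 1))).comp qSucc = C qq * (X - C (qint i)) := by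
  rw [qSucc, sub_comp, X_comp, C_comp, qint_succ, map_add, map_mul, map_one]
  ring

lemma prod_X_sub_qint_comp_qSucc (j : ℕ) :
    (∏ i ∈ range (j + 1), (X - C (qint i))).comp qSucc =
      C (qq ^ j) * qSucc * ∏ i ∈ range j, (X - C (qint i)) := by
  rw [Polynomial.prod_comp, prod_range_succ',
    prod_congr rfl fun i _ => X_sub_qint_succ_comp_qSucc i, prod_mul_distrib, prod_const,
    card_range, qint_zero, map_zero, sub_zero, X_comp, map_pow]
  ring

lemma qbinom_succ_comp_qSucc (j : ℕ) :
    (qbinom (j + 1)).comp qSucc = C (qq ^ (j + 1)) * qbinom (j + 1) + C (qq ^ j) * qbinom j := by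
  have hcomp :
      (qbinom (j + 1)).comp qSucc = C (qq ^ j * (qint (j + 1))⁻¹) * qSucc * qbinom j := by
    rw [qbinom, mul_comp, C_comp, prod_X_sub_qint_comp_qSucc, qbinom, prod_range_succ, mul_inv,
      map_mul, map_mul]
    ring
  have hqSucc : qSucc = C qq * (X - C (qint j)) + C (qint (j + 1)) := by
    rw [qSucc, qint_succ, map_add, map_mul, map_one]
    ring
  have hinv : C (qint (j + 1))⁻¹ * C (qint (j + 1)) = 1 := by
    rw [← map_mul, inv_mul_cancel₀ (qint_ne_zero j.succ_ne_zero), map_one]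
  rw [hcomp, hqSucc, qbinom_succ, map_mul, map_pow, map_pow]
  linear_combination C qq ^ j * qbinom j * hinv

lemma qbinom_succ_comp_qSucc_sub (j : ℕ) :
    (qbinom (j + 1)).comp qSucc - qbinom (j + 1) = (1 + C (qq - 1) * X) * qbinom j := by
  have hinv : C (qint (j + 1)) * C (qint (j + 1))⁻¹ = 1 := by
    rw [← map_mul, mul_inv_cancel₀ (qint_ne_zero j.succ_ne_zero), map_one]
  have h1 := congrArg C (sub_one_mul_qint (j + 1))
  have h2 := congrArg C (sub_one_mul_qint j)
  simp only [map_mul, map_sub, map_pow, map_one] at h1 h2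
  rw [qbinom_succ_comp_qSucc, qbinom_succ, map_pow, map_pow, map_sub, map_one]
  linear_combination -(C (qint (j + 1))⁻¹ * (X - C (qint j)) * qbinom j) * h1
    - qbinom j * h2 + (C qq - 1) * (X - C (qint j)) * qbinom j * hinv

lemma qbinom_succ_eval_zero (j : ℕ) : (qbinom (j + 1)).eval 0 = 0 := by
  simp [qbinom, eval_prod, prod_range_succ', qint_zero]

lemma qbinom_succ_eval_neg_inv (j : ℕ) :
    (qbinom (j + 1)).eval (-qq⁻¹) = -qq⁻¹ * (qbinom j).eval (-qq⁻¹) := by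
  have hq := qq_ne_zero
  have hj := qint_ne_zero j.succ_ne_zero
  rw [qbinom_succ, eval_mul, eval_mul, eval_C, eval_sub, eval_X, eval_C]
  congr 1
  field_simp
  rw [qint_succ]
  ring

noncomputable def qbinomSum (c : ℕ → RatFunc ℚ) (N : ℕ) : (RatFunc ℚ)[X] :=
  ∑ j ∈ range N, C (c j) * qbinom j

noncomputable def qSuccCoeff (c : ℕ → RatFunc ℚ) (j : ℕ) : RatFunc ℚ :=
  qq ^ j * (c j + c (j + 1))

lemma qbinomSum_const_mul (a : RatFunc ℚ) (c : ℕ → RatFunc ℚ) (N : ℕ) :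
    qbinomSum (fun j => a * c j) N = C a * qbinomSum c N := by
  simp only [qbinomSum, mul_sum, map_mul, mul_assoc]

lemma qbinomSum_succ_comp_qSucc (c : ℕ → RatFunc ℚ) (N : ℕ) :
    (qbinomSum c (N + 1)).comp qSucc =
      qbinomSum (qSuccCoeff c) (N + 1) - C (qq ^ N * c (N + 1)) * qbinom N := by
  induction N with
  | zero => simp [qbinomSum, qSuccCoeff, qbinom_zero]
  | succ N ih =>
    simp only [qbinomSum] at ih ⊢
    rw [sum_range_succ, add_comp, ih, mul_comp, C_comp, qbinom_succ_comp_qSucc,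
      sum_range_succ _ (N + 1), qSuccCoeff]
    simp only [map_mul, map_add, map_pow]
    ring

lemma qbinomSum_comp_qSucc (c : ℕ → RatFunc ℚ) {N : ℕ} (hc : c N = 0) :
    (qbinomSum c N).comp qSucc = qbinomSum (qSuccCoeff c) N := by
  cases N with
  | zero => simp [qbinomSum]
  | succ N => rw [qbinomSum_succ_comp_qSucc, hc, mul_zero, map_zero, zero_mul, sub_zero]

lemma qbinomSum_succ_comp_qSucc_sub (c : ℕ → RatFunc ℚ) (N : ℕ) :
    (qbinomSum c (N + 1)).comp qSucc - qbinomSum c (N + 1) =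
      (1 + C (qq - 1) * X) * qbinomSum (fun j => c (j + 1)) N := by
  rw [qbinomSum, qbinomSum, Polynomial.sum_comp, ← sum_sub_distrib, sum_range_succ', mul_sum]
  simp only [mul_comp, C_comp, ← mul_sub, qbinom_succ_comp_qSucc_sub, qbinom_zero, one_comp,
    sub_self, add_zero]
  exact sum_congr rfl fun j _ => by ring

lemma qbinomSum_succ_eval_zero (c : ℕ → RatFunc ℚ) (N : ℕ) :
    (qbinomSum c (N + 1)).eval 0 = c 0 := by
  simp [qbinomSum, eval_finsetSum, sum_range_succ', qbinom_succ_eval_zero, qbinom_zero]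

lemma qbinomSum_succ_eval_neg_inv (c : ℕ → RatFunc ℚ) (N : ℕ) :
    (qbinomSum c (N + 1)).eval (-qq⁻¹) =
      c 0 + -qq⁻¹ * (qbinomSum (fun j => c (j + 1)) N).eval (-qq⁻¹) := by
  rw [qbinomSum, qbinomSum, sum_range_succ', eval_add, eval_finsetSum, eval_finsetSum, mul_sum,
    add_comm]
  simp only [eval_mul, eval_C, qbinom_succ_eval_neg_inv, qbinom_zero, mul_one]
  exact congrArg _ (sum_congr rfl fun j _ => by ring)

/-- `f(N,k|q⁻¹) q^{-C(k,2)}`, extended by `0` to negative `k` so that the recurrence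
`normBallot_succ` needs no boundary case. -/
noncomputable def normBallot (N : ℕ) : ℤ → RatFunc ℚ
  | Int.ofNat k => Polynomial.aeval qq⁻¹ (fq N k) / qq ^ k.choose 2
  | Int.negSucc _ => 0

lemma normBallot_natCast (N k : ℕ) :
    normBallot N k = Polynomial.aeval qq⁻¹ (fq N k) / qq ^ k.choose 2 := rfl

lemma normBallot_of_neg (N : ℕ) {k : ℤ} (hk : k < 0) : normBallot N k = 0 := by
  cases k with
  | ofNat k => exact absurd hk (by simp)
  | negSucc k => rfl

lemma fq_of_lt {N k : ℕ} (h : N < k) : fq N k = 0 := by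
  obtain ⟨k, rfl⟩ := Nat.exists_eq_add_one_of_ne_zero (Nat.ne_zero_of_lt h)
  cases N with
  | zero => rw [fq]
  | succ N => rw [fq, if_neg (by omega)]

lemma normBallot_of_lt {N k : ℕ} (h : N < k) : normBallot N k = 0 := by
  rw [normBallot_natCast, fq_of_lt h, map_zero, zero_div]

lemma normBallot_succ {N k : ℕ} (hk : k ≤ N + 1) :
    qq ^ k * normBallot (N + 1) k = normBallot (N + 1) (k - 1) + normBallot N k := by
  cases k with
  | zero =>
    rw [normBallot_natCast, normBallot_natCast, Nat.cast_zero, zero_sub,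
      normBallot_of_neg _ (by norm_num), fq]
    ring
  | succ k =>
    rw [normBallot_natCast (N + 1) (k + 1), normBallot_natCast N (k + 1), Nat.cast_succ,
      add_sub_cancel_right, normBallot_natCast, fq, if_pos hk, Nat.choose_succ_succ',
      Nat.choose_one_right]
    simp only [map_add, map_mul, map_pow, aeval_X, inv_pow]
    field_simp [qq_ne_zero]
    ring

lemma normBallot_add_two {N k : ℕ} (hk : k ≤ N + 1) :
    qq ^ (2 * k) * normBallot (N + 2) k =
      normBallot N k + (1 + qq) * normBallot (N + 1) (k - 1) + qq * normBallot (N + 2) (k - 2) := by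
  have hfirst := normBallot_succ (N := N + 1) (k := k) (by omega)
  have hsecond := normBallot_succ (N := N) (k := k) hk
  cases k with
  | zero =>
    simp only [Nat.cast_zero, zero_sub, normBallot_of_neg _ (by norm_num : (-1 : ℤ) < 0),
      normBallot_of_neg _ (by norm_num : (-2 : ℤ) < 0)] at hfirst hsecond ⊢
    linear_combination hfirst + hsecond
  | succ m =>
    have hthird := normBallot_succ (N := N + 1) (k := m) (by omega)
    have h1 : ((m + 1 : ℕ) : ℤ) - 1 = m := by push_cast; ring
    have h2 : ((m + 1 : ℕ) : ℤ) - 2 = m - 1 := by push_cast; ring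
    rw [h1] at hfirst hsecond ⊢
    rw [h2]
    linear_combination qq ^ (m + 1) * hfirst + qq * hthird + hsecond

noncomputable def ballotCoeff (n j : ℕ) : RatFunc ℚ :=
  qq ^ (n ^ 2) * normBallot (n + j) ((n : ℤ) - j)

noncomputable def ballotPoly (n : ℕ) : (RatFunc ℚ)[X] :=
  qbinomSum (ballotCoeff n) (n + 1)

lemma ballotCoeff_eq {n j N : ℕ} {k : ℤ} (hN : n + j = N) (hk : (n : ℤ) - j = k) :
    ballotCoeff n j = qq ^ (n ^ 2) * normBallot N k := by
  subst hN hk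
  rfl

lemma ballotCoeff_of_lt {n j : ℕ} (h : n < j) : ballotCoeff n j = 0 := by
  rw [ballotCoeff, normBallot_of_neg _ (by omega), mul_zero]

lemma ballot_exponent_add_choose_two {n j : ℕ} (h : j ≤ n) :
    j * n + (n - j) * (n + j + 1) / 2 + (n - j).choose 2 = n ^ 2 := by
  obtain ⟨k, rfl⟩ := Nat.exists_eq_add_of_le h
  rw [Nat.add_sub_cancel_left, Nat.choose_two_right]
  have h1 : 2 * (k * (j + k + j + 1) / 2) = k * (j + k + j + 1) :=
    Nat.mul_div_cancel' (even_iff_two_dvd.mp (by simp [Nat.even_mul, parity_simps]; tauto))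
  have h2 : 2 * (k * (k - 1) / 2) = k * (k - 1) :=
    Nat.mul_div_cancel' (Nat.even_mul_pred_self k).two_dvd
  cases k with
  | zero => simp [sq]
  | succ m =>
    simp only [Nat.add_sub_cancel] at h2 ⊢
    linarith [h1, h2]

lemma ballotCoeff_eq_of_le {n j : ℕ} (h : j ≤ n) :
    ballotCoeff n j = Polynomial.aeval qq⁻¹ (fq (n + j) (n - j)) *
      qq ^ (j * n + (n - j) * (n + j + 1) / 2) := by
  rw [ballotCoeff_eq rfl (Nat.cast_sub h).symm, normBallot_natCast,
    ← ballot_exponent_add_choose_two h, pow_add]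
  field_simp [qq_ne_zero]

lemma ballotPoly_eq_sum (n : ℕ) :
    ballotPoly n = ∑ j ∈ range (n + 1), C (Polynomial.aeval qq⁻¹ (fq (n + j) (n - j)) *
      qq ^ (j * n + (n - j) * (n + j + 1) / 2)) * qbinom j := by
  rw [ballotPoly, qbinomSum]
  refine sum_congr rfl fun j hj => ?_
  rw [ballotCoeff_eq_of_le (Nat.lt_succ_iff.mp (mem_range.mp hj))]

lemma ballotCoeff_succ_succ (n j : ℕ) :
    ballotCoeff (n + 1) (j + 1) = qq * qSuccCoeff (qSuccCoeff (ballotCoeff n)) j := by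
  rcases le_or_gt j n with h | h
  · obtain ⟨k, rfl⟩ := Nat.exists_eq_add_of_le h
    rw [qSuccCoeff, qSuccCoeff, qSuccCoeff,
      ballotCoeff_eq (N := 2 * j + k + 2) (k := k) (by omega) (by push_cast; ring),
      ballotCoeff_eq (N := 2 * j + k) (k := k) (by omega) (by push_cast; ring),
      ballotCoeff_eq (N := 2 * j + k + 1) (k := k - 1) (by omega) (by push_cast; ring),
      ballotCoeff_eq (N := 2 * j + k + 2) (k := k - 2) (by omega) (by push_cast; ring)]
    linear_combination qq ^ ((j + k) ^ 2) * qq ^ (2 * j + 1) *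
      normBallot_add_two (N := 2 * j + k) (k := k) (by omega)
  · simp only [qSuccCoeff, ballotCoeff_of_lt (show n + 1 < j + 1 by omega),
      ballotCoeff_of_lt h, ballotCoeff_of_lt (show n < j + 1 by omega),
      ballotCoeff_of_lt (show n < j + 2 by omega)]
    ring

lemma ballotCoeff_succ_zero (n : ℕ) : ballotCoeff (n + 1) 0 = qSuccCoeff (ballotCoeff n) 0 := by
  have hfirst := normBallot_succ (N := n) (k := n + 1) le_rfl
  have hsecond := normBallot_succ (N := n) (k := n) (by omega)
  rw [normBallot_of_lt (Nat.lt_succ_self n), add_zero, Nat.cast_succ, add_sub_cancel_right]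
    at hfirst
  rw [qSuccCoeff, ballotCoeff_eq (n := n + 1) (j := 0) (N := n + 1) (k := n + 1) rfl (by simp),
    ballotCoeff_eq (n := n) (j := 0) (N := n) (k := n) rfl (by simp),
    ballotCoeff_eq (n := n) (j := 1) (N := n + 1) (k := n - 1) rfl (by simp)]
  linear_combination qq ^ (n ^ 2) * (qq ^ n * hfirst + hsecond)

lemma qSuccCoeff_ballotCoeff_of_lt {n j : ℕ} (h : n < j) : qSuccCoeff (ballotCoeff n) j = 0 := by
  rw [qSuccCoeff, ballotCoeff_of_lt h, ballotCoeff_of_lt (by omega), add_zero, mul_zero]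

lemma ballotPoly_zero : ballotPoly 0 = 1 := by
  rw [ballotPoly, qbinomSum, sum_range_one, ballotCoeff_eq_of_le le_rfl, qbinom_zero]
  simp [fq]

lemma ballotPoly_succ_comp_qSucc_sub (n : ℕ) :
    (ballotPoly (n + 1)).comp qSucc - ballotPoly (n + 1) =
      C qq * (1 + C (qq - 1) * X) * ((ballotPoly n).comp qSucc).comp qSucc := by
  rw [ballotPoly, qbinomSum_succ_comp_qSucc_sub]
  simp only [ballotCoeff_succ_succ]
  rw [qbinomSum_const_mul, ballotPoly, qbinomSum_comp_qSucc _ (ballotCoeff_of_lt n.lt_succ_self),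
    qbinomSum_comp_qSucc _ (qSuccCoeff_ballotCoeff_of_lt n.lt_succ_self)]
  ring

lemma ballotPoly_succ_eval_neg_inv (n : ℕ) : (ballotPoly (n + 1)).eval (-qq⁻¹) = 0 := by
  rw [ballotPoly, qbinomSum_succ_eval_neg_inv]
  simp only [ballotCoeff_succ_succ]
  rw [qbinomSum_const_mul, ← qbinomSum_comp_qSucc _ (qSuccCoeff_ballotCoeff_of_lt n.lt_succ_self),
    eval_mul, eval_C, eval_comp, qSucc_eval_neg_inv, qbinomSum_succ_eval_zero,
    ballotCoeff_succ_zero]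
  field_simp [qq_ne_zero]
  ring

lemma comp_qSucc_sub_self_of_sub_comp_qPred {P R : (RatFunc ℚ)[X]}
    (h : P - P.comp qPred = (1 + C (qq - 1) * X) * R) :
    P.comp qSucc - P = C qq * (1 + C (qq - 1) * X) * R.comp qSucc := by
  have h' := congrArg (·.comp qSucc) h
  simp only [sub_comp, comp_assoc, qPred_comp_qSucc, comp_X, mul_comp, add_comp, one_comp,
    C_comp, X_comp] at h'
  rw [h', qSucc, map_sub, map_one]
  ring

lemma eq_zero_of_comp_qSucc_eq_self {P : (RatFunc ℚ)[X]} (h : P.comp qSucc = P)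
    (h0 : P.eval (-qq⁻¹) = 0) : P = 0 := by
  have hP := eq_C_of_comp_eq_self (b := 1) qq_ne_zero not_isOfFinOrder_qq (by rwa [map_one])
  rw [hP, eval_C] at h0
  rw [hP, h0, map_zero]

/-- For all `n ≥ 0`:
`C_{n+1}(x|q) = Σ_{j=0}^{n} f(n+j, n-j|q⁻¹) q^{jn + (n-j)(n+j+1)/2} (x choose j)_q`. -/
theorem statement10 (Cs : ℕ → Polynomial (RatFunc ℚ))
    (h1 : Cs 1 = 1)
    (h2 : ∀ n, 2 ≤ n → (Cs n).eval (-qq⁻¹) = 0)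
    (h3 : ∀ n, 1 ≤ n →
      Cs (n + 1) -
          (Cs (n + 1)).comp (Polynomial.C qq⁻¹ * Polynomial.X - Polynomial.C qq⁻¹) =
        (1 + Polynomial.C (qq - 1) * Polynomial.X) *
          (Cs n).comp (Polynomial.C qq * Polynomial.X + 1))
    (n : ℕ) :
    Cs (n + 1) =
      ∑ j ∈ Finset.range (n + 1),
        Polynomial.C (Polynomial.aeval qq⁻¹ (fq (n + j) (n - j)) *
          qq ^ (j * n + (n - j) * (n + j + 1) / 2)) * qbinom j := by
  rw [← ballotPoly_eq_sum]
  induction n with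
  | zero => rw [h1, ballotPoly_zero]
  | succ m ih =>
    have hCs : (Cs (m + 2)).comp qSucc - Cs (m + 2) =
        C qq * (1 + C (qq - 1) * X) * ((ballotPoly m).comp qSucc).comp qSucc := by
      rw [← ih]
      exact comp_qSucc_sub_self_of_sub_comp_qPred (h3 (m + 1) le_add_self)
    refine sub_eq_zero.mp (eq_zero_of_comp_qSucc_eq_self ?_ ?_)
    · rw [sub_comp]
      linear_combination hCs - ballotPoly_succ_comp_qSucc_sub m
    · rw [eval_sub, h2 _ le_add_self, ballotPoly_succ_eval_neg_inv, sub_zero]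
end

section
/- For all integers n ≥ k ≥ 0, the following identity holds in ℤ[q]: f(n+k, n | q) = Σ_{j=0}^{k} f(n+j, n-j | q) · q^{(n-j)(k-j)+j} · [k choose j]_q. -/
open Polynomial Finset

/-- The `q`-shifted factorial `(q;q)_m = (1-q)(1-q²)⋯(1-q^m)` in `ℚ(q)`. -/
noncomputable def qpoch (m : ℕ) : RatFunc ℚ := ∏ i ∈ Finset.range m, (1 - qq ^ (i + 1))

/-- The Gaussian binomial coefficient `[k choose j]_q = (q;q)_k/((q;q)_j (q;q)_{k-j})`. -/
noncomputable def gauss (k j : ℕ) : RatFunc ℚ := qpoch k / (qpoch j * qpoch (k - j))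

lemma qq_pow_ne_one_s12 (m : ℕ) : qq ^ (m+1) ≠ 1 := by
  unfold qq
  rw [show (RatFunc.X : RatFunc ℚ) = algebraMap ℚ[X] _ Polynomial.X from rfl,
    ← map_pow, ← map_one (algebraMap ℚ[X] (RatFunc ℚ))]
  intro h
  have h2 := RatFunc.algebraMap_injective ℚ h
  have := congrArg natDegree h2
  simp [natDegree_X_pow] at this

lemma one_sub_qq_pow_ne_zero (m : ℕ) (hm : 1 ≤ m) : 1 - qq ^ m ≠ 0 := by
  obtain ⟨m, rfl⟩ := Nat.exists_eq_add_of_le hm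
  rw [add_comm] at *; exact sub_ne_zero.mpr (fun h => qq_pow_ne_one_s12 m h.symm)

lemma qpoch_ne_zero (m : ℕ) : qpoch m ≠ 0 := by
  unfold qpoch
  apply Finset.prod_ne_zero_iff.mpr
  intro i _
  exact one_sub_qq_pow_ne_zero _ (by omega)

lemma qpoch_succ (m : ℕ) : qpoch (m+1) = qpoch m * (1 - qq ^ (m+1)) := by
  unfold qpoch; rw [Finset.prod_range_succ]

lemma qpoch_zero : qpoch 0 = 1 := by unfold qpoch; simp

lemma gauss_self (k : ℕ) : gauss k k = 1 := by
  unfold gauss; simp [qpoch_zero, div_self (qpoch_ne_zero k)]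

lemma gauss_zero (k : ℕ) : gauss k 0 = 1 := by
  unfold gauss; simp [qpoch_zero, div_self (qpoch_ne_zero k)]

lemma pascal (k j : ℕ) (h : j + 1 ≤ k) :
    gauss (k+1) (j+1) = gauss k (j+1) + qq ^ (k - j) * gauss k j := by
  unfold gauss
  have h1 : k + 1 - (j + 1) = k - j := by omega
  have h2 : k - j = (k - (j+1)) + 1 := by omega
  have e1 : qq ^ (k + 1) = qq ^ (k - j) * qq ^ (j + 1) := by
    rw [← pow_add]; congr 1; omega
  rw [h1, qpoch_succ k, e1, h2, qpoch_succ (k - (j+1)), qpoch_succ j, ← h2]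
  have hx : (1 : RatFunc ℚ) - qq ^ (j+1) ≠ 0 := one_sub_qq_pow_ne_zero _ (by omega)
  have hy : (1 : RatFunc ℚ) - qq ^ (k-j) ≠ 0 := one_sub_qq_pow_ne_zero _ (by omega)
  generalize qq ^ (j+1) = x at *
  generalize qq ^ (k-j) = y at *
  field_simp [qpoch_ne_zero]
  ring

noncomputable def FF (a b : ℕ) : RatFunc ℚ := Polynomial.aeval qq (fq a b)

lemma F_rec (a b : ℕ) (h : b ≤ a) :
    FF (a+1) (b+1) = qq * FF (a+1) b + qq^(b+1) * FF a (b+1) := by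
  unfold FF
  rw [fq, if_pos (by omega : b + 1 ≤ a + 1)]
  simp

lemma key (n : ℕ) : ∀ k, k ≤ n → ∀ m,
    ∑ j ∈ Finset.range (k+1), FF (n+m+j) (n-j) * qq ^ ((n-j)*(k-j)+j) * gauss k j
      = FF (n+m+k) n := by
  intro k
  induction k with
  | zero => intro _ m; simp [gauss_zero]
  | succ k ih =>
    intro h m
    have ih' := ih (by omega)
    -- recurrence per term
    have hrec : ∀ j, j ≤ k → FF (n+m+1+j) (n-j)
        = qq * FF (n+m+1+j) (n-(j+1)) + qq^(n-j) * FF (n+m+j) (n-j) := by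
      intro j hj
      have hb : n - j = (n - (j+1)) + 1 := by omega
      have ha : n+m+1+j = (n+m+j) + 1 := by omega
      rw [ha, hb, F_rec (n+m+j) (n-(j+1)) (by omega), ← hb]
    calc ∑ j ∈ Finset.range (k+1+1),
            FF (n+m+j) (n-j) * qq ^ ((n-j)*(k+1-j)+j) * gauss (k+1) j
        = (∑ j ∈ Finset.range (k+1),
            FF (n+m+(j+1)) (n-(j+1)) * qq ^ ((n-(j+1))*(k+1-(j+1))+(j+1)) * gauss (k+1) (j+1))
          + FF (n+m+0) (n-0) * qq ^ ((n-0)*(k+1-0)+0) * gauss (k+1) 0 :=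
          Finset.sum_range_succ' _ _
      _ = ((∑ j ∈ Finset.range k,
            FF (n+m+(j+1)) (n-(j+1)) * qq ^ ((n-(j+1))*(k+1-(j+1))+(j+1)) * gauss (k+1) (j+1))
          + FF (n+m+(k+1)) (n-(k+1)) * qq ^ ((n-(k+1))*(k+1-(k+1))+(k+1)) * gauss (k+1) (k+1))
          + FF (n+m+0) (n-0) * qq ^ ((n-0)*(k+1-0)+0) * gauss (k+1) 0 := by
          rw [Finset.sum_range_succ]
      _ = ((∑ j ∈ Finset.range k,
            (FF (n+m+(j+1)) (n-(j+1)) * qq ^ ((n-(j+1))*(k-(j+1))+(j+1)+(n-(j+1))) * gauss k (j+1)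
             + qq * FF (n+m+(j+1)) (n-(j+1)) * qq ^ ((n-j)*(k-j)+j) * gauss k j))
          + qq * FF (n+m+(k+1)) (n-(k+1)) * qq ^ ((n-k)*(k-k)+k) * gauss k k)
          + FF (n+m+0) (n-0) * qq ^ ((n-0)*(k-0)+0+(n-0)) * gauss k 0 := by
          congr 1
          · congr 1
            · refine Finset.sum_congr rfl (fun j hj => ?_)
              have hjk : j + 1 ≤ k := by
                have := Finset.mem_range.mp hj; omega
              rw [pascal k j hjk]
              have c1 : k+1-(j+1) = k - j := by omega
              have c2 : k - j = (k-(j+1)) + 1 := by omega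
              have c3 : n - j = (n-(j+1)) + 1 := by omega
              have p1 : qq ^ ((n-(j+1))*(k+1-(j+1))+(j+1))
                  = qq^((n-(j+1))*(k-(j+1))) * qq^(j+1) * qq^(n-(j+1)) := by
                rw [← pow_add, ← pow_add]; congr 1; rw [c1, c2]; ring
              have p2 : qq ^ ((n-(j+1))*(k-(j+1))+(j+1)+(n-(j+1)))
                  = qq^((n-(j+1))*(k-(j+1))) * qq^(j+1) * qq^(n-(j+1)) := by
                rw [← pow_add, ← pow_add]
              have p3 : qq ^ ((n-j)*(k-j)+j)
                  = qq^((n-(j+1))*(k-(j+1))) * qq^(j+1) * qq^(n-(j+1)) * qq^(k-(j+1)) := by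
                rw [← pow_add, ← pow_add, ← pow_add]; congr 1; rw [c2, c3]; ring
              have p4 : qq^(k-j) = qq^(k-(j+1)) * qq := by rw [c2, pow_succ]
              rw [p1, p2, p3, p4]
              ring
            · -- top term: A (k+1) = D k
              have c1 : k+1-(k+1) = 0 := by omega
              rw [c1, gauss_self, gauss_self, Nat.sub_self, Nat.mul_zero, Nat.zero_add,
                Nat.mul_zero, Nat.zero_add, mul_one, mul_one, pow_succ]
              ring
          · -- bottom term: A 0 = P 0
            simp [gauss_zero, Nat.mul_succ]
      _ = ((∑ j ∈ Finset.range k,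
            FF (n+m+(j+1)) (n-(j+1)) * qq ^ ((n-(j+1))*(k-(j+1))+(j+1)+(n-(j+1))) * gauss k (j+1))
          + FF (n+m+0) (n-0) * qq ^ ((n-0)*(k-0)+0+(n-0)) * gauss k 0)
          + ((∑ j ∈ Finset.range k,
            qq * FF (n+m+(j+1)) (n-(j+1)) * qq ^ ((n-j)*(k-j)+j) * gauss k j)
          + qq * FF (n+m+(k+1)) (n-(k+1)) * qq ^ ((n-k)*(k-k)+k) * gauss k k) := by
          rw [Finset.sum_add_distrib]; ring
      _ = (∑ j ∈ Finset.range (k+1),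
            FF (n+m+j) (n-j) * qq ^ ((n-j)*(k-j)+j+(n-j)) * gauss k j)
          + ∑ j ∈ Finset.range (k+1),
            qq * FF (n+m+(j+1)) (n-(j+1)) * qq ^ ((n-j)*(k-j)+j) * gauss k j := by
          rw [Finset.sum_range_succ' (fun j => FF (n+m+j) (n-j) * qq ^ ((n-j)*(k-j)+j+(n-j)) * gauss k j) k,
            Finset.sum_range_succ (fun j => qq * FF (n+m+(j+1)) (n-(j+1)) * qq ^ ((n-j)*(k-j)+j) * gauss k j) k]
      _ = ∑ j ∈ Finset.range (k+1),
            FF (n+(m+1)+j) (n-j) * qq ^ ((n-j)*(k-j)+j) * gauss k j := by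
          rw [← Finset.sum_add_distrib]
          refine Finset.sum_congr rfl (fun j hj => ?_)
          have hjk : j ≤ k := by have := Finset.mem_range.mp hj; omega
          have h1 : n+(m+1)+j = n+m+1+j := by omega
          have h2 : n+m+(j+1) = n+m+1+j := by omega
          rw [h1, h2, hrec j hjk, pow_add]
          ring
      _ = FF (n+(m+1)+k) n := ih' (m+1)
      _ = FF (n+m+(k+1)) n := by congr 1; omega

/-- For `n ≥ k ≥ 0`:
`f(n+k, n|q) = Σ_{j=0}^{k} f(n+j, n-j|q) q^{(n-j)(k-j)+j} [k choose j]_q`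
(the identity in `ℤ[q]`, viewed inside `ℚ(q)`). -/
theorem statement12 (n k : ℕ) (hkn : k ≤ n) :
    Polynomial.aeval qq (fq (n + k) n) =
      ∑ j ∈ Finset.range (k + 1),
        Polynomial.aeval qq (fq (n + j) (n - j)) * qq ^ ((n - j) * (k - j) + j) *
          gauss k j := by
  have h := key n k hkn 0
  simpa [FF] using h.symm
end

section
/- For all n ≥ 1, the following identity of polynomials in x over ℚ holds: (x+2)·(x+n+2)(x+n+3)⋯(x+2n-1)/(n-1)! = Σ_{j=0}^{n-1} ((2j+2)/(n+j+1))·binom(2n-1, n-j-1)·binom(x, j); equivalently, ((x+2)/(x+n+1))·binom(x+2n-1, n-1) = Σ_{j=0}^{n-1} ((2j+2)/(n+j+1))·binom(2n-1, n-j-1)·binom(x, j). -/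
open Polynomial Finset Nat

/-- The generalized binomial coefficient polynomial `binom(x, j) = x(x-1)⋯(x-j+1)/j!`. -/
noncomputable def choosePoly (j : ℕ) : Polynomial ℚ :=
  Polynomial.C ((j ! : ℚ))⁻¹ * ∏ i ∈ Finset.range j, (Polynomial.X - Polynomial.C (i : ℚ))

/-!
Two polynomials over `ℚ` that agree at every natural number are equal, so take `x = m ∈ ℕ`.
The ballot coefficient is `C(2n-1, n+j) - C(2n-1, n+j+1)`, so by Vandermonde the right-hand
sum is `C(m+2n-1, m+n) - C(m+2n-1, m+n+1)`, and the same ballot identity, now with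
`p = n-1, q = m+n`, turns this difference into `(m+2)/(m+n+1) · C(m+2n-1, n-1)`.
-/

theorem choosePoly_eval_natCast (j m : ℕ) : (choosePoly j).eval (m : ℚ) = m.choose j := by
  simp only [choosePoly, eval_mul, eval_C, eval_prod, eval_sub, eval_X,
    ← descPochhammer_eval_eq_prod_range, descPochhammer_eval_eq_descFactorial,
    descFactorial_eq_factorial_mul_choose, Nat.cast_mul]
  exact inv_mul_cancel_left₀ (by positivity) _

theorem prod_range_natCast_add_one_add {R : Type*} [CommSemiring R] (a k : ℕ) :
    ∏ i ∈ range k, ((a : R) + 1 + i) = k ! * (a + k).choose k := by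
  rw [← Nat.cast_mul, ← ascFactorial_eq_factorial_mul_choose, ascFactorial_eq_prod_range]
  push_cast
  rfl

theorem Nat.cast_choose_sub_choose_succ {K : Type*} [Field K] [CharZero K] (p q : ℕ) :
    ((p + q).choose q : K) - (p + q).choose (q + 1) =
      (q + 1 - p) / (q + 1) * (p + q).choose p := by
  have hsucc : ((p + q).choose (q + 1) : K) * (q + 1) = (p + q).choose q * p := by
    exact_mod_cast (p + q).choose_succ_right_eq q |>.trans (by rw [Nat.add_sub_cancel])
  rw [Nat.choose_symm_add]
  field_simp
  linear_combination -hsucc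

theorem Nat.sum_range_choose_add_mul_choose (A r m : ℕ) :
    ∑ j ∈ range (m + 1), A.choose (r + j) * m.choose j = (A + m).choose (r + m) := by
  rw [add_choose_eq,
    Finset.Nat.sum_antidiagonal_eq_sum_range_succ (fun a b => A.choose a * m.choose b),
    show (r + m).succ = r + (m + 1) from rfl, sum_range_add _ r, sum_eq_zero (s := range r),
    zero_add]
  · refine sum_congr rfl fun j hj => ?_
    rw [show r + m - (r + j) = m - j by omega, choose_symm (by simpa [Nat.lt_succ_iff] using hj)]
  · intro k hk
    rw [choose_eq_zero_of_lt (n := m) (by simp at hk; omega), mul_zero]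

theorem Nat.sum_range_choose_add_mul_choose_of_lt {A r n : ℕ} (m : ℕ) (h : A < r + n) :
    ∑ j ∈ range n, A.choose (r + j) * m.choose j = (A + m).choose (r + m) := by
  rw [← sum_range_choose_add_mul_choose, ← eventually_constant_sum (N := n) (n := n + (m + 1)),
    eventually_constant_sum (N := m + 1)]
  all_goals first
    | omega
    | intro j hj; simp only [mul_eq_zero, choose_eq_zero_iff]; omega

theorem add_two_mul_choose_eq_sum_ballot (n m : ℕ) (hn : 1 ≤ n) :
    ((m : ℚ) + 2) * (m + n + (n - 1)).choose (n - 1) =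
      ((m : ℚ) + n + 1) *
        ∑ j ∈ range n, (2 * (j : ℚ) + 2) / (n + j + 1) * ((2 * n - 1).choose (n - j - 1) : ℚ) *
          m.choose j := by
  have hballot : ∀ j ∈ range n,
      (2 * (j : ℚ) + 2) / (n + j + 1) * ((2 * n - 1).choose (n - j - 1) : ℚ) * m.choose j =
        ((2 * n - 1).choose (n + j) : ℚ) * m.choose j -
          (2 * n - 1).choose (n + 1 + j) * m.choose j := by
    intro j hj
    have hjn : j + 1 ≤ n := mem_range.mp hj
    have h := Nat.cast_choose_sub_choose_succ (K := ℚ) (n - j - 1) (n + j)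
    have hcast : ((n - j - 1 : ℕ) : ℚ) = n - j - 1 := by
      rw [Nat.sub_sub, Nat.cast_sub hjn]
      push_cast
      ring
    rw [show n - j - 1 + (n + j) = 2 * n - 1 by omega, hcast] at h
    rw [← sub_mul, add_right_comm n 1, h]
    push_cast
    ring
  have hsum : ∀ r, n ≤ r →
      ∑ j ∈ range n, ((2 * n - 1).choose (r + j) : ℚ) * m.choose j =
        (2 * n - 1 + m).choose (r + m) :=
    fun r hr => mod_cast Nat.sum_range_choose_add_mul_choose_of_lt m (by omega)
  have hdiff := Nat.cast_choose_sub_choose_succ (K := ℚ) (n - 1) (n + m)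
  rw [show n - 1 + (n + m) = 2 * n - 1 + m by omega, Nat.cast_sub hn] at hdiff
  rw [sum_congr rfl hballot, sum_sub_distrib, hsum n le_rfl, hsum (n + 1) (by omega),
    add_right_comm n 1 m, hdiff, show m + n + (n - 1) = 2 * n - 1 + m by omega]
  push_cast
  field_simp
  ring

/-- For all `n ≥ 1`:
`((x+2)/(x+n+1))·binom(x+2n-1, n-1)
  = Σ_{j=0}^{n-1} ((2j+2)/(n+j+1))·binom(2n-1, n-j-1)·binom(x, j)`,
written with the denominator `x+n+1` cleared (note
`binom(x+2n-1, n-1) = (x+n+1)(x+n+2)⋯(x+2n-1)/(n-1)!`). -/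
theorem statement17 (n : ℕ) (hn : 1 ≤ n) :
    (Polynomial.X + Polynomial.C (2 : ℚ)) * (Polynomial.C (((n - 1)! : ℚ))⁻¹ *
        ∏ i ∈ Finset.range (n - 1), (Polynomial.X + Polynomial.C ((n : ℚ) + 1 + i))) =
      (Polynomial.X + Polynomial.C ((n : ℚ) + 1)) *
        ∑ j ∈ Finset.range n,
          Polynomial.C ((2 * (j : ℚ) + 2) / ((n : ℚ) + j + 1) *
            ((2 * n - 1).choose (n - j - 1) : ℚ)) * choosePoly j := by
  refine eq_of_infinite_eval_eq _ _ <|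
    (Set.infinite_range_of_injective Nat.cast_injective).mono ?_
  rintro _ ⟨m, rfl⟩
  have hprod := prod_range_natCast_add_one_add (R := ℚ) (m + n) (n - 1)
  push_cast at hprod
  simp only [Set.mem_ofPred_eq, eval_mul, eval_add, eval_X, eval_C, eval_prod, eval_finsetSum,
    choosePoly_eval_natCast, ← add_assoc, hprod,
    inv_mul_cancel_left₀ (mod_cast factorial_ne_zero (n - 1) : ((n - 1)! : ℚ) ≠ 0)]
  exact add_two_mul_choose_eq_sum_ballot n m hn
end

section
/- For every integer N ≥ 0, the following identity of polynomials in z over ℚ holds: (z+N+2)(z+N+3)⋯(z+2N+1)/N! = Σ_{k=0}^{N} 4^{N-k} · (3/2)_{N-k} · (z+k)_k / ((3)_{N-k} · k!), where (a)_m denotes the rising factorial (a)_0 = 1, (a)_m = a(a+1)⋯(a+m-1); in particular the left-hand side is (z+N+2)_N / N!. -/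
/-!
Write `Q_k(z) = (z + k)_k / k! = binom(z + 2k - 1, k)` and `A_m(c) = 2 Q_m(c) - Q_m(c + 1)`,
which is `c / (c + 2m) * binom(c + 2m, m)`. The identity is the case `c = 2` of the Hagen–Rothe
convolution `Q_N(z + c) = Σ_k A_{N-k}(c) Q_k(z)`, because `4^m (3/2)_m / (3)_m = A_m(2)`
(both are the Catalan number `C_{m+1}`). Both families obey Pascal's rule
`f_{m+1}(c + 1) - f_{m+1}(c) = f_m(c + 2)`, and `A_m(0) = δ_{m,0}` makes the case `c = 0` trivial,
so the convolution follows by induction on `N` and then on `c ∈ ℕ`.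
-/

open Polynomial Finset Nat

namespace HagenRothe

variable {K : Type*} [Field K] [CharZero K]

noncomputable def risingBinom (k : ℕ) (z : K) : K := (ascPochhammer K k).eval (z + k) / k !

noncomputable def rotheCoeff (m : ℕ) (c : K) : K := 2 * risingBinom m c - risingBinom m (c + 1)

@[simp]
lemma risingBinom_zero_left (z : K) : risingBinom 0 z = 1 := by
  simp [risingBinom]

lemma risingBinom_succ_add_one_sub (k : ℕ) (z : K) :
    risingBinom (k + 1) (z + 1) - risingBinom (k + 1) z = risingBinom k (z + 2) := by
  have hk : ((k + 1 : ℕ) : K) ≠ 0 := Nat.cast_ne_zero.2 k.succ_ne_zero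
  have hpoch : (ascPochhammer K (k + 1)).eval (z + 1 + (k + 1 : ℕ))
      - (ascPochhammer K (k + 1)).eval (z + (k + 1 : ℕ))
      = (k + 1 : ℕ) * (ascPochhammer K k).eval (z + 2 + k) := by
    rw [ascPochhammer_succ_eval, ascPochhammer_succ_left, eval_mul, eval_comp]
    simp only [eval_X, eval_add, eval_one]
    push_cast
    ring_nf
  simp only [risingBinom, ← sub_div, hpoch, factorial_succ, Nat.cast_mul]
  field_simp

lemma risingBinom_succ_zero (k : ℕ) : risingBinom (k + 1) (0 : K) = risingBinom k 2 := by
  have hk : ((k + 1 : ℕ) : K) ≠ 0 := Nat.cast_ne_zero.2 k.succ_ne_zero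
  simp only [risingBinom, ascPochhammer_succ_left, eval_mul, eval_comp, eval_X, eval_add,
    eval_one, factorial_succ, Nat.cast_mul, zero_add]
  field_simp
  push_cast
  ring_nf

@[simp]
lemma rotheCoeff_zero_left (c : K) : rotheCoeff 0 c = 1 := by
  norm_num [rotheCoeff]

lemma rotheCoeff_succ_zero (m : ℕ) : rotheCoeff (m + 1) (0 : K) = 0 := by
  have h := risingBinom_succ_add_one_sub m (0 : K)
  rw [zero_add, zero_add, ← risingBinom_succ_zero] at h
  rw [rotheCoeff, zero_add]
  linear_combination -h

lemma rotheCoeff_succ_add_one_sub (m : ℕ) (c : K) :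
    rotheCoeff (m + 1) (c + 1) - rotheCoeff (m + 1) c = rotheCoeff m (c + 2) := by
  have h₀ := risingBinom_succ_add_one_sub m c
  have h₁ := risingBinom_succ_add_one_sub m (c + 1)
  simp only [rotheCoeff]
  ring_nf at h₀ h₁ ⊢
  linear_combination 2 * h₀ - h₁

theorem risingBinom_add_natCast (N n : ℕ) (z : K) :
    risingBinom N (z + n) =
      ∑ k ∈ range (N + 1), rotheCoeff (N - k) (n : K) * risingBinom k z := by
  induction N generalizing n with
  | zero => simp
  | succ N ihN =>
    induction n with
    | zero =>
      rw [sum_range_succ, sum_eq_zero fun k hk => ?_]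
      · simp
      · rw [show N + 1 - k = N - k + 1 by simp at hk; omega, Nat.cast_zero, rotheCoeff_succ_zero,
          zero_mul]
    | succ n ihn =>
      have hcoeff : ∀ k ∈ range (N + 1), rotheCoeff (N + 1 - k) ((n + 1 : ℕ) : K) =
          rotheCoeff (N + 1 - k) (n : K) + rotheCoeff (N - k) ((n + 2 : ℕ) : K) := fun k hk => by
        rw [show N + 1 - k = N - k + 1 by simp at hk; omega]
        push_cast
        linear_combination rotheCoeff_succ_add_one_sub (N - k) (n : K)
      calc risingBinom (N + 1) (z + (n + 1 : ℕ))
          = risingBinom (N + 1) (z + n) + risingBinom N (z + (n + 2 : ℕ)) := by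
            rw [show z + ((n + 1 : ℕ) : K) = z + n + 1 by push_cast; ring,
              show z + ((n + 2 : ℕ) : K) = z + n + 2 by push_cast; ring]
            linear_combination risingBinom_succ_add_one_sub N (z + n)
        _ = ∑ k ∈ range (N + 1 + 1),
              rotheCoeff (N + 1 - k) ((n + 1 : ℕ) : K) * risingBinom k z := by
            rw [ihn, ihN, sum_range_succ _ (N + 1), sum_range_succ _ (N + 1),
              sum_congr rfl fun k hk => congrArg (· * risingBinom k z) (hcoeff k hk)]
            simp only [add_mul, sum_add_distrib, Nat.sub_self, rotheCoeff_zero_left]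
            ring

lemma ascPochhammer_eval_three (m : ℕ) : (ascPochhammer K m).eval 3 = (m + 2)! / 2 := by
  have h := Nat.factorial_mul_ascFactorial 2 m
  rw [show (3 : K) = ((2 + 1 : ℕ) : K) by norm_num, ascPochhammer_nat_eq_natCast_ascFactorial,
    add_comm m, ← h]
  push_cast [Nat.factorial_two]
  ring

lemma four_pow_mul_ascPochhammer_eval_three_halves (m : ℕ) :
    4 ^ m * (ascPochhammer K m).eval (3 / 2) = (2 * m + 1)! / m ! := by
  induction m with
  | zero => simp
  | succ m ih =>
    have hm : ((m + 1 : ℕ) : K) ≠ 0 := Nat.cast_ne_zero.2 m.succ_ne_zero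
    calc 4 ^ (m + 1) * (ascPochhammer K (m + 1)).eval (3 / 2)
        = 4 ^ m * (ascPochhammer K m).eval (3 / 2) * (4 * (3 / 2 + m)) := by
          rw [ascPochhammer_succ_eval, pow_succ]
          ring
      _ = (2 * (m + 1) + 1)! / (m + 1)! := by
          rw [ih, show 2 * (m + 1) + 1 = 2 * m + 1 + 1 + 1 by ring, factorial_succ (2 * m + 1 + 1),
            factorial_succ (2 * m + 1), factorial_succ m]
          push_cast at hm ⊢
          field_simp
          ring

lemma rotheCoeff_two (m : ℕ) : rotheCoeff m (2 : K) = 2 * (2 * m + 1)! / (m ! * (m + 2)!) := by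
  have h₂ : ((m + 1) * m ! * (m + 2).ascFactorial m : K) = (2 * m + 1)! := by
    have h := Nat.factorial_mul_ascFactorial (m + 1) m
    rw [factorial_succ, show m + 1 + m = 2 * m + 1 by ring] at h
    exact_mod_cast h
  have h₃ : ((m + 2) * (m + 1) * m ! * (m + 3).ascFactorial m : K) =
      (2 * m + 2) * (2 * m + 1)! := by
    have h := Nat.factorial_mul_ascFactorial (m + 2) m
    rw [show m + 2 + m = 2 * m + 1 + 1 by ring, factorial_succ (2 * m + 1), factorial_succ (m + 1),
      factorial_succ m] at h
    have hK := congrArg (Nat.cast : ℕ → K) h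
    push_cast at hK
    linear_combination hK
  simp only [rotheCoeff, risingBinom]
  rw [show (2 : K) + m = ((m + 2 : ℕ) : K) by push_cast; ring,
    show (2 : K) + 1 + m = ((m + 3 : ℕ) : K) by push_cast; ring,
    ascPochhammer_nat_eq_natCast_ascFactorial, ascPochhammer_nat_eq_natCast_ascFactorial,
    factorial_succ (m + 1), factorial_succ m]
  have hm : ((m + 1 : ℕ) : K) ≠ 0 := Nat.cast_ne_zero.2 m.succ_ne_zero
  have hm' : ((m + 1 + 1 : ℕ) : K) ≠ 0 := Nat.cast_ne_zero.2 (m + 1).succ_ne_zero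
  have hf : (m ! : K) ≠ 0 := Nat.cast_ne_zero.2 m.factorial_ne_zero
  push_cast at hm hm' ⊢
  field_simp
  linear_combination 2 * (m + 2) * h₂ - h₃

lemma four_pow_mul_ascPochhammer_div_eq_rotheCoeff_two (m : ℕ) :
    4 ^ m * (ascPochhammer K m).eval (3 / 2) / (ascPochhammer K m).eval 3 =
      rotheCoeff m (2 : K) := by
  have hf : (m ! : K) ≠ 0 := Nat.cast_ne_zero.2 m.factorial_ne_zero
  have hf' : ((m + 2)! : K) ≠ 0 := Nat.cast_ne_zero.2 (m + 2).factorial_ne_zero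
  rw [four_pow_mul_ascPochhammer_eval_three_halves, ascPochhammer_eval_three, rotheCoeff_two]
  field_simp

end HagenRothe

/-- For every `N ≥ 0`:
`(z+N+2)_N / N! = Σ_{k=0}^{N} 4^{N-k} (3/2)_{N-k} (z+k)_k / ((3)_{N-k} k!)`,
an identity of polynomials in `z` over `ℚ`, where `(a)_m` is the rising factorial. -/
theorem statement18 (N : ℕ) :
    Polynomial.C ((N ! : ℚ))⁻¹ *
        (ascPochhammer ℚ N).comp (Polynomial.X + Polynomial.C ((N : ℚ) + 2)) =
      ∑ k ∈ Finset.range (N + 1),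
        Polynomial.C ((4 : ℚ) ^ (N - k) * (ascPochhammer ℚ (N - k)).eval ((3 : ℚ) / 2) /
            ((ascPochhammer ℚ (N - k)).eval (3 : ℚ) * (k ! : ℚ))) *
          (ascPochhammer ℚ k).comp (Polynomial.X + Polynomial.C (k : ℚ)) := by
  refine Polynomial.funext fun z => ?_
  have hconv := HagenRothe.risingBinom_add_natCast N 2 z
  simp only [HagenRothe.risingBinom, Nat.cast_ofNat] at hconv
  simp only [eval_mul, eval_C, eval_comp, eval_add, eval_X, eval_finsetSum]
  rw [show z + ((N : ℚ) + 2) = z + 2 + N by ring, inv_mul_eq_div, hconv]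
  refine sum_congr rfl fun k _ => ?_
  rw [← HagenRothe.four_pow_mul_ascPochhammer_div_eq_rotheCoeff_two]
  ring
end
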